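/- For any set D = {d_1 > ... > d_n} of positive integers, 2·ℓ_q(D) ≥ (Σ_{i=1}^{n} d_i) + (d_1 + 1 − n)·d_n, and consequently 2·ℓ_q(D) > (1 + √2)(n − 1)·d_n. -/

import Mathlib

/-- The degree set of a finite simple graph: the set of distinct vertex degrees. -/
def degreeSet {V : Type} [Fintype V] (G : SimpleGraph V) [DecidableRel G.Adj] : Finset ℕ :=
  Finset.univ.image (fun v => G.degree v)

/-- `lq D` is the least number of edges of a finite simple graph whose degree set is `D`. -/
noncomputable def lq (D : Finset ℕ) : ℕ :=
  sInf {q | ∃ (p : ℕ) (G : SimpleGraph (Fin p)) (inst : DecidableRel G.Adj),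
    @degreeSet _ _ G inst = D ∧
    (@SimpleGraph.edgeFinset _ G (@SimpleGraph.fintypeEdgeSet _ G _ inst)).card = q}

/-!
Handshaking gives `2 ℓ_q(D) = Σ_v deg v` for an optimal graph. One vertex of each degree in `D`
contributes `Σ dᵢ`; a vertex of degree `d₁` forces at least `d₁ + 1` vertices, and each of the
remaining ones has degree at least `dₙ`. The minimum is attained because `D` is realised at all,
e.g. by the disjoint union of the cliques `K_{d+1}`, `d ∈ D`.

For the second bound, distinctness gives `Σ dᵢ ≥ n dₙ + n(n-1)/2` and `d₁ ≥ dₙ + n - 1`, and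
AM-GM gives `√2 (n-1) dₙ ≤ (n-1)²/2 + dₙ²`.
-/

open Finset

section DegreeSet

variable {V : Type} [Fintype V] (G : SimpleGraph V) [DecidableRel G.Adj]

theorem mem_degreeSet {x : ℕ} : x ∈ degreeSet G ↔ ∃ v, G.degree v = x := by
  simp [degreeSet]

theorem SimpleGraph.Iso.degreeSet_eq {W : Type} [Fintype W] {G' : SimpleGraph W}
    [DecidableRel G'.Adj] (f : G ≃g G') : degreeSet G' = degreeSet G := by
  ext x
  simp only [mem_degreeSet]
  exact ⟨fun ⟨w, hw⟩ => ⟨f.symm w, (f.symm.degree_eq w).trans hw⟩,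
    fun ⟨v, hv⟩ => ⟨f v, (f.degree_eq v).trans hv⟩⟩

theorem lt_card_of_mem_degreeSet {x : ℕ} (hx : x ∈ degreeSet G) : x < Fintype.card V := by
  obtain ⟨v, rfl⟩ := (mem_degreeSet G).1 hx
  exact G.degree_lt_card_verts v

theorem sum_degreeSet_add_le_sum_degree {m : ℕ} (hm : ∀ v, m ≤ G.degree v) :
    ∑ x ∈ degreeSet G, x + (Fintype.card V - #(degreeSet G)) * m ≤ ∑ v, G.degree v := by
  classical
  obtain ⟨I, -, hinj, himage⟩ := Finset.exists_subset_injOn_image_eq_of_surjOn Set.univ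
    (degreeSet G) fun x hx => by
      obtain ⟨v, hv⟩ := (mem_degreeSet G).1 hx
      exact ⟨v, trivial, hv⟩
  have hcard : #I = #(degreeSet G) := by rw [← himage, card_image_of_injOn hinj]
  have hsum : ∑ x ∈ degreeSet G, x = ∑ v ∈ I, G.degree v := by rw [← himage, sum_image hinj]
  have hrest : #Iᶜ * m ≤ ∑ v ∈ Iᶜ, G.degree v := by
    simpa using card_nsmul_le_sum Iᶜ (G.degree ·) m fun v _ => hm v
  rw [← sum_add_sum_compl I, hsum, ← hcard, ← card_compl]
  omega

theorem sum_add_mul_le_two_mul_card_edgeFinset {D : Finset ℕ} (hD : degreeSet G = D)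
    (hne : D.Nonempty) :
    ∑ x ∈ D, x + (D.max' hne + 1 - #D) * D.min' hne ≤ 2 * #G.edgeFinset := by
  subst hD
  have hverts : (degreeSet G).max' hne + 1 ≤ Fintype.card V :=
    lt_card_of_mem_degreeSet G (max'_mem _ hne)
  have hmin : ∀ v, (degreeSet G).min' hne ≤ G.degree v :=
    fun v => min'_le _ _ ((mem_degreeSet G).2 ⟨v, rfl⟩)
  rw [← G.sum_degrees_eq_twice_card_edges]
  refine le_trans ?_ (sum_degreeSet_add_le_sum_degree G hmin)
  gcongr

end DegreeSet

def cliqueUnion (D : Finset ℕ) : SimpleGraph (Σ d : D, Fin (d + 1)) where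
  Adj x y := x.1 = y.1 ∧ x ≠ y
  symm := ⟨fun _ _ h => ⟨h.1.symm, h.2.symm⟩⟩
  loopless := ⟨fun _ h => h.2 rfl⟩

@[simp]
theorem cliqueUnion_adj {D : Finset ℕ} {x y : Σ d : D, Fin (d + 1)} :
    (cliqueUnion D).Adj x y ↔ x.1 = y.1 ∧ x ≠ y :=
  Iff.rfl

instance (D : Finset ℕ) : DecidableRel (cliqueUnion D).Adj :=
  fun x y => inferInstanceAs (Decidable (x.1 = y.1 ∧ x ≠ y))

theorem card_filter_sigma_fst_eq (D : Finset ℕ) (d : D) :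
    #{y : Σ d : D, Fin (d + 1) | y.1 = d} = d + 1 := by
  have : ({y | y.1 = d} : Finset (Σ d : D, Fin (d + 1))) = univ.map (.sigmaMk d) := by
    ext ⟨e, i⟩
    simp only [mem_filter, mem_univ, true_and, mem_map, Function.Embedding.sigmaMk_apply]
    constructor
    · rintro rfl; exact ⟨i, rfl⟩
    · rintro ⟨j, h⟩; exact (congrArg Sigma.fst h).symm
  rw [this, card_map, card_univ, Fintype.card_fin]

theorem cliqueUnion_degree (D : Finset ℕ) (x : Σ d : D, Fin (d + 1)) :
    (cliqueUnion D).degree x = x.1 := by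
  classical
  have hneighbors : (cliqueUnion D).neighborFinset x = ({y | y.1 = x.1} : Finset _).erase x := by
    ext y
    simp only [SimpleGraph.mem_neighborFinset, cliqueUnion_adj, mem_erase, mem_filter,
      mem_univ, true_and]
    grind
  rw [← SimpleGraph.card_neighborFinset_eq_degree, hneighbors,
    card_erase_of_mem (by simp), card_filter_sigma_fst_eq, Nat.add_sub_cancel]

theorem degreeSet_cliqueUnion (D : Finset ℕ) : degreeSet (cliqueUnion D) = D := by
  ext x
  simp only [mem_degreeSet, cliqueUnion_degree]
  exact ⟨fun ⟨y, hy⟩ => hy ▸ y.1.2, fun hx => ⟨⟨⟨x, hx⟩, 0⟩, rfl⟩⟩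

theorem exists_card_edgeFinset_eq_lq (D : Finset ℕ) :
    ∃ (p : ℕ) (G : SimpleGraph (Fin p)) (_ : DecidableRel G.Adj),
      degreeSet G = D ∧ #G.edgeFinset = lq D := by
  classical
  apply Nat.sInf_mem (s := {q | ∃ (p : ℕ) (G : SimpleGraph (Fin p)) (_ : DecidableRel G.Adj),
    degreeSet G = D ∧ #G.edgeFinset = q})
  refine ⟨_, _, (cliqueUnion D).map (Fintype.equivFin _).toEmbedding, inferInstance, ?_, rfl⟩
  exact (SimpleGraph.Iso.map (Fintype.equivFin _) (cliqueUnion D)).degreeSet_eq.trans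
    (degreeSet_cliqueUnion D)

theorem card_mul_add_le_sum (s : Finset ℕ) {m : ℕ} (hm : ∀ x ∈ s, m ≤ x) :
    (#s : ℝ) * m + #s * (#s - 1) / 2 ≤ ∑ x ∈ s, (x : ℝ) := by
  induction s using Finset.induction_on_max with
  | empty => simp
  | insert a s hlt ih =>
    have ha : a ∉ s := fun h => lt_irrefl a (hlt a h)
    have hgap : m + #s ≤ a := by
      have hsub : s ⊆ Ico m a := fun x hx => mem_Ico.2 ⟨hm x (mem_insert_of_mem hx), hlt x hx⟩
      have := card_le_card hsub
      have := hm a (mem_insert_self a s)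
      simp only [Nat.card_Ico] at *
      omega
    have hgap' : (m : ℝ) + #s ≤ a := by exact_mod_cast hgap
    rw [card_insert_of_notMem ha, sum_insert ha]
    push_cast
    linarith [ih fun x hx => hm x (mem_insert_of_mem hx)]

theorem min'_add_card_le_max'_add_one (s : Finset ℕ) (hs : s.Nonempty) :
    s.min' hs + #s ≤ s.max' hs + 1 := by
  have hsub : s ⊆ Icc (s.min' hs) (s.max' hs) :=
    fun x hx => mem_Icc.2 ⟨min'_le s x hx, le_max' s x hx⟩
  have := card_le_card hsub
  have := min'_le_max' s hs
  rw [Nat.card_Icc] at *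
  omega

theorem one_add_sqrt_two_mul_lt {n m S M : ℝ} (hn : 1 ≤ n) (hm : 0 < m)
    (hS : n * m + n * (n - 1) / 2 ≤ S) (hM : m + n - 1 ≤ M) :
    (1 + √2) * (n - 1) * m < S + (M + 1 - n) * m := by
  have hamgm : √2 * (n - 1) * m ≤ (n - 1) ^ 2 / 2 + m ^ 2 := by
    nlinarith [sq_nonneg (n - 1 - √2 * m), Real.sq_sqrt (zero_le_two (α := ℝ))]
  nlinarith [mul_le_mul_of_nonneg_right hM hm.le]

/-- For `D = {d₁ > … > dₙ}`, `2 ℓ_q(D) ≥ Σᵢ dᵢ + (d₁ + 1 − n) dₙ`, and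
consequently `2 ℓ_q(D) > (1 + √2)(n − 1) dₙ`. -/
theorem lq_sharper_lower_bound (D : Finset ℕ) (hne : D.Nonempty)
    (hpos : ∀ x ∈ D, 0 < x) :
    ((∑ x ∈ D, x : ℕ) : ℝ) + ((D.max' hne : ℝ) + 1 - D.card) * (D.min' hne : ℝ)
      ≤ 2 * (lq D : ℝ) ∧
    (1 + Real.sqrt 2) * ((D.card : ℝ) - 1) * (D.min' hne : ℝ) < 2 * (lq D : ℝ) := by
  obtain ⟨p, G, _, hG, hq⟩ := exists_card_edgeFinset_eq_lq D
  have hgap := min'_add_card_le_max'_add_one D hne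
  have hbound : ((∑ x ∈ D, x : ℕ) : ℝ) + ((D.max' hne : ℝ) + 1 - #D) * D.min' hne
      ≤ 2 * (lq D : ℝ) := by
    rw [← Nat.cast_add_one, ← Nat.cast_sub (by omega)]
    exact_mod_cast hq ▸ sum_add_mul_le_two_mul_card_edgeFinset G hG hne
  refine ⟨hbound, lt_of_lt_of_le (one_add_sqrt_two_mul_lt ?_ ?_ ?_ ?_) hbound⟩
  · exact_mod_cast card_pos.2 hne
  · exact_mod_cast hpos _ (min'_mem D hne)
  · rw [Nat.cast_sum]
    exact card_mul_add_le_sum D fun x hx => min'_le D x hx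
  · have : (D.min' hne : ℝ) + #D ≤ D.max' hne + 1 := by exact_mod_cast hgap
    linarith
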